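/- For every positive integer n, $B_{n,\lambda}^{(s)}(x,y)=\sum_{m=0}^{n}\sum_{k=0}^{m}\sum_{l=0}^{\lfloor (k-1)/2\rfloor}\binom{n}{m}\binom{k}{2l+1}(-1)^l\lambda^{n-k}S_1(m,k)\,b_{n-m}\,B_{k-2l-1}(x)\,y^{2l+1}$. -/

import Mathlib

open PowerSeries Finset Complex

/-- The degenerate falling factorial `(x)_{n,λ} = x(x-λ)⋯(x-(n-1)λ)`. -/
noncomputable def dff (l x : ℂ) (n : ℕ) : ℂ := ∏ j ∈ Finset.range n, (x - j * l)

/-- Exponential generating function of a sequence: `Σ f n * t^n / n!`. -/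
noncomputable def egf (f : ℕ → ℂ) : PowerSeries ℂ := PowerSeries.mk fun n => f n / n.factorial

/-- The degenerate exponential `e_λ^x(t) = (1+λt)^{x/λ} = Σ (x)_{n,λ} t^n/n!` as a power series. -/
noncomputable def degExp (l x : ℂ) : PowerSeries ℂ := egf (dff l x)

/-- The degenerate cosine `cos_λ^{(y)}(t) = cos((y/λ) log(1+λt)) = (e_λ^{iy}(t)+e_λ^{-iy}(t))/2`. -/
noncomputable def degCos (l y : ℂ) : PowerSeries ℂ :=
  (PowerSeries.C : ℂ →+* PowerSeries ℂ) (1/2) * (degExp l (Complex.I * y) + degExp l (-(Complex.I * y)))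

/-- The degenerate sine `sin_λ^{(y)}(t) = sin((y/λ) log(1+λt)) = (e_λ^{iy}(t)-e_λ^{-iy}(t))/(2i)`. -/
noncomputable def degSin (l y : ℂ) : PowerSeries ℂ :=
  (PowerSeries.C : ℂ →+* PowerSeries ℂ) (1/(2*Complex.I)) * (degExp l (Complex.I * y) - degExp l (-(Complex.I * y)))

/-- The exponential series `e^{at} = Σ a^n t^n/n!`. -/
noncomputable def expS (a : ℂ) : PowerSeries ℂ := egf (fun n => a ^ n)

/-- The series of `log(1+t)`. -/
noncomputable def logS : PowerSeries ℂ := PowerSeries.mk fun n => if n = 0 then 0 else (-1)^(n+1) / n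

/-!
Put `f(t) = λ⁻¹ log (1 + λt)`. Both `e_λ^z(t)` and `e^{z f(t)}` solve `(1 + λt) G' = z G` with
`G(0) = 1`, so `e_λ^z = e^z ∘ f` and hence `sin_λ^{(y)} = sin(y ·) ∘ f`. Substituting `f` into
`t/(e^{t/2} - e^{-t/2}) e^{xt} sin(yt)` therefore gives the generating function of
`B_{n,λ}^{(s)}(x, y)` times `f(t)/t`, and `t/f(t) = Σ b_m λ^m t^m/m!`. The coefficients of a
series composed with `f` are read off from `f^k = k! Σ_m λ^{m-k} S_1(m, k) t^m/m!`.
-/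

lemma coeff_egf (f : ℕ → ℂ) (n : ℕ) : coeff n (egf f) = f n / n.factorial := by
  simp [egf]

lemma egf_injective : Function.Injective egf := by
  intro f g h
  funext n
  have := congrArg (coeff n) h
  rwa [coeff_egf, coeff_egf, div_left_inj' (Nat.cast_ne_zero.mpr n.factorial_ne_zero)] at this

lemma egf_mul (f g : ℕ → ℂ) :
    egf f * egf g = egf fun n => ∑ m ∈ range (n + 1), (n.choose m : ℂ) * f m * g (n - m) := by
  ext n
  rw [coeff_mul, Nat.sum_antidiagonal_eq_sum_range_succ_mk, coeff_egf, sum_div]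
  refine sum_congr rfl fun m hm => ?_
  have hmn : m ≤ n := Nat.lt_succ_iff.mp (mem_range.mp hm)
  have := n.factorial_ne_zero
  rw [coeff_egf, coeff_egf, Nat.cast_choose ℂ hmn]
  field_simp

lemma rescale_egf (a : ℂ) (f : ℕ → ℂ) : rescale a (egf f) = egf fun n => a ^ n * f n := by
  ext n
  rw [coeff_rescale, coeff_egf, coeff_egf, mul_div_assoc]

lemma derivative_egf (f : ℕ → ℂ) : d⁄dX ℂ (egf f) = egf fun n => f (n + 1) := by
  ext n
  rw [coeff_derivative, coeff_egf, coeff_egf, Nat.factorial_succ]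
  push_cast
  field_simp

theorem coeff_subst_eq_sum_range {R : Type*} [CommRing R] {a : PowerSeries R}
    (ha : constantCoeff a = 0) (A : PowerSeries R) (n : ℕ) :
    coeff n (A.subst a) = ∑ k ∈ range (n + 1), coeff k A * coeff n (a ^ k) := by
  rw [coeff_subst' (HasSubst.of_constantCoeff_zero' ha), finsum_eq_sum_of_support_subset]
  · rfl
  intro k hk
  rw [coe_range, Set.mem_Iio, Nat.lt_succ_iff]
  by_contra! hnk
  refine hk ?_
  change coeff k A • coeff n (a ^ k) = 0
  rw [coeff_of_lt_order (φ := a ^ k) n, smul_zero]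
  exact (Nat.cast_lt.mpr hnk).trans_le (le_order_pow_of_constantCoeff_eq_zero k ha)

noncomputable def logDivX : PowerSeries ℂ := mk fun n => (-1) ^ n / (n + 1)

lemma logS_eq_X_mul : logS = X * logDivX := by
  ext n
  cases n with
  | zero => simp [logS]
  | succ n =>
    rw [coeff_succ_X_mul]
    simp [logS, logDivX, pow_succ]

/-- `λ⁻¹ log (1 + λ t)`, written so that it is also meaningful at `λ = 0`, where it is `t`. -/
noncomputable def degLog (l : ℂ) : PowerSeries ℂ := X * rescale l logDivX

lemma constantCoeff_degLog (l : ℂ) : constantCoeff (degLog l) = 0 := by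
  simp [degLog]

lemma coeff_degLog_pow (l : ℂ) (n k : ℕ) :
    coeff n (degLog l ^ k) = l ^ (n - k) * coeff n (logS ^ k) := by
  rw [degLog, logS_eq_X_mul, mul_pow, mul_pow, ← map_pow (rescale l), coeff_X_pow_mul',
    coeff_X_pow_mul']
  split_ifs
  · rw [coeff_rescale]
  · rw [mul_zero]

lemma one_add_mul_derivative_degLog (l : ℂ) : (1 + C l * X) * d⁄dX ℂ (degLog l) = 1 := by
  have hD : d⁄dX ℂ (degLog l) = mk fun n => (-l) ^ n := by
    ext n
    rw [coeff_derivative, degLog, coeff_succ_X_mul, coeff_rescale]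
    simp only [logDivX, coeff_mk]
    rw [neg_eq_neg_one_mul l, mul_pow]
    field_simp
  ext n
  cases n with
  | zero => simp [hD]
  | succ n =>
    simp only [hD, add_mul, one_mul, mul_assoc, map_add, coeff_mk, pow_succ, coeff_C_mul,
      coeff_succ_X_mul, coeff_one, Nat.add_eq_zero_iff, one_ne_zero, and_false, if_false]
    ring

lemma hasSubst_degLog (l : ℂ) : HasSubst (degLog l) :=
  HasSubst.of_constantCoeff_zero' (constantCoeff_degLog l)

lemma derivative_expS (z : ℂ) : d⁄dX ℂ (expS z) = z • expS z := by
  ext n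
  simp only [expS, derivative_egf, pow_succ, coeff_egf, mul_div_assoc, map_smul, smul_eq_mul]
  ring

theorem eq_degExp_of_derivative {l z : ℂ} {G : PowerSeries ℂ}
    (hG : (1 + C l * X) * d⁄dX ℂ G = z • G) (h0 : constantCoeff G = 1) :
    G = degExp l z := by
  have hrec (n : ℕ) : (n + 1) * coeff (n + 1) G = (z - n * l) * coeff n G := by
    have := congrArg (coeff n) hG
    cases n with
    | zero =>
      simp only [add_mul, one_mul, mul_assoc, map_add, coeff_C_mul, coeff_zero_X_mul,
        coeff_derivative, coeff_smul, smul_eq_mul] at this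
      linear_combination this
    | succ n =>
      simp only [add_mul, one_mul, mul_assoc, map_add, coeff_C_mul, coeff_succ_X_mul,
        coeff_derivative, coeff_smul, smul_eq_mul] at this
      push_cast at this ⊢
      linear_combination this
  ext n
  rw [degExp, coeff_egf]
  induction n with
  | zero => simp [dff, h0]
  | succ n ih =>
    have : (n.factorial : ℂ) ≠ 0 := Nat.cast_ne_zero.mpr n.factorial_ne_zero
    have hn : (n : ℂ) + 1 ≠ 0 := by exact_mod_cast n.succ_ne_zero
    have hstep := hrec n
    rw [ih] at hstep
    rw [dff, prod_range_succ, ← dff, Nat.factorial_succ]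
    push_cast
    field_simp at hstep ⊢
    linear_combination hstep

theorem expS_subst_degLog (l z : ℂ) : (expS z).subst (degLog l) = degExp l z := by
  apply eq_degExp_of_derivative
  · rw [derivative_subst (hasSubst_degLog l), derivative_expS, subst_smul (hasSubst_degLog l),
      smul_mul_assoc, mul_smul_comm, mul_left_comm, one_add_mul_derivative_degLog, mul_one]
  · rw [← coeff_zero_eq_constantCoeff_apply, coeff_subst_eq_sum_range (constantCoeff_degLog l)]
    simp [expS, coeff_egf]

theorem egf_subst_degLog {S1 : ℕ → ℕ → ℂ}
    (hS1 : ∀ j, logS ^ j = (PowerSeries.C : ℂ →+* PowerSeries ℂ) (Nat.factorial j) *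
      egf (fun k => S1 k j)) (l : ℂ) (a : ℕ → ℂ) :
    (egf a).subst (degLog l) = egf fun n => ∑ k ∈ range (n + 1), S1 n k * l ^ (n - k) * a k := by
  ext n
  rw [coeff_subst_eq_sum_range (constantCoeff_degLog l), coeff_egf, sum_div]
  refine sum_congr rfl fun k _ => ?_
  have := k.factorial_ne_zero
  rw [coeff_egf, coeff_degLog_pow, hS1, coeff_C_mul, coeff_egf]
  field_simp

lemma egf_mul_degLog_eq_X {b : ℕ → ℂ} (hb : egf b * logS = X) (l : ℂ) :
    egf (fun m => l ^ m * b m) * degLog l = X := by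
  have hb' : egf b * logDivX = 1 := by
    rw [logS_eq_X_mul, mul_left_comm] at hb
    exact mul_left_cancel₀ X_ne_zero (hb.trans (mul_one X).symm)
  rw [degLog, ← rescale_egf, mul_left_comm, ← map_mul, hb', map_one, mul_one]

noncomputable def sinS (y : ℂ) : PowerSeries ℂ :=
  egf fun k => if Even k then 0 else (-1) ^ (k / 2) * y ^ k

lemma sinS_eq (y : ℂ) : sinS y = C (1 / (2 * I)) * (expS (I * y) - expS (-(I * y))) := by
  ext k
  rw [sinS, coeff_C_mul, map_sub, expS, expS, coeff_egf, coeff_egf, coeff_egf]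
  obtain ⟨r, rfl | rfl⟩ := Nat.even_or_odd' k
  · simp [Even.neg_pow ⟨r, two_mul r⟩]
  · have hr : (2 * r + 1) / 2 = r := by omega
    rw [if_neg (Nat.not_even_iff_odd.mpr (odd_two_mul_add_one r)), hr,
      Odd.neg_pow (odd_two_mul_add_one r), mul_pow, pow_succ I, pow_mul I, I_sq]
    field_simp
    ring

lemma degSin_eq_subst (l y : ℂ) : degSin l y = (sinS y).subst (degLog l) := by
  rw [sinS_eq, subst_mul (hasSubst_degLog l), subst_sub (hasSubst_degLog l),
    expS_subst_degLog, expS_subst_degLog, subst_C]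
  rfl

lemma Finset.sum_range_two_mul_add_one_of_even_eq_zero {M : Type*} [AddCommMonoid M]
    {f : ℕ → M} (hf : ∀ r, f (2 * r) = 0) (N : ℕ) :
    ∑ m ∈ range (2 * N + 1), f m = ∑ l ∈ range N, f (2 * l + 1) := by
  induction N with
  | zero => simpa using hf 0
  | succ N ih =>
    rw [show 2 * (N + 1) + 1 = 2 * N + 1 + 1 + 1 by ring, sum_range_succ, sum_range_succ, ih,
      sum_range_succ, show 2 * N + 1 + 1 = 2 * (N + 1) by ring, hf, add_zero]

lemma sinS_mul_egf (y : ℂ) (B : ℕ → ℂ) :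
    sinS y * egf B = egf fun k => ∑ l ∈ range ((k - 1) / 2 + 1),
      (k.choose (2 * l + 1) : ℂ) * (-1) ^ l * y ^ (2 * l + 1) * B (k - 2 * l - 1) := by
  rw [sinS, egf_mul]
  congr 1
  funext k
  have hk : range (k + 1) ⊆ range (2 * ((k - 1) / 2 + 1) + 1) := range_subset_range.mpr (by omega)
  rw [sum_subset hk fun j _ hj => by
      rw [Nat.choose_eq_zero_of_lt (by rw [mem_range] at hj; omega), Nat.cast_zero, zero_mul, zero_mul],
    sum_range_two_mul_add_one_of_even_eq_zero (by simp)]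
  refine sum_congr rfl fun l _ => ?_
  rw [if_neg (Nat.not_even_iff_odd.mpr (odd_two_mul_add_one l)),
    show (2 * l + 1) / 2 = l by omega, Nat.sub_sub]
  ring

theorem egf_eq_subst_degLog_mul {l x y : ℂ} {Bs B b : ℕ → ℂ}
    (hBs : egf Bs * (degExp l (1/2) - degExp l (-(1/2))) = X * degExp l x * degSin l y)
    (hB : egf B * (expS (1/2) - expS (-(1/2))) = X * expS x)
    (hb : egf b * logS = X) :
    egf Bs = (sinS y * egf B).subst (degLog l) * egf fun m => l ^ m * b m := by
  have hf := hasSubst_degLog l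
  have hH : degExp l (1/2) - degExp l (-(1/2)) =
      (expS (1/2) - expS (-(1/2))).subst (degLog l) := by
    rw [subst_sub hf, expS_subst_degLog, expS_subst_degLog]
  have hH0 : degExp l (1/2) - degExp l (-(1/2)) ≠ 0 := fun h => by
    simpa [degExp, dff, coeff_egf] using congrArg (coeff 1) h
  refine mul_right_cancel₀ hH0 ?_
  calc egf Bs * (degExp l (1/2) - degExp l (-(1/2)))
      = (egf (fun m => l ^ m * b m) * degLog l) * (expS x).subst (degLog l) *
          (sinS y).subst (degLog l) := by
        rw [hBs, egf_mul_degLog_eq_X hb, expS_subst_degLog, degSin_eq_subst]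
    _ = egf (fun m => l ^ m * b m) * (sinS y * (X * expS x)).subst (degLog l) := by
        rw [subst_mul hf, subst_mul hf, subst_X hf]
        ring
    _ = _ := by
        rw [← hB, hH, subst_mul hf, subst_mul hf, subst_mul hf]
        ring

theorem stmt19_general (lam x y : ℝ) (Bs B b : ℕ → ℂ) (S1 : ℕ → ℕ → ℂ)
    (hBs : egf Bs * (degExp lam (1/2) - degExp lam (-(1/2))) =
      PowerSeries.X * degExp lam x * degSin lam y)
    (hB : egf B * (expS (1/2) - expS (-(1/2))) = PowerSeries.X * expS x)
    (hb : egf b * logS = PowerSeries.X)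
    (hS1 : ∀ j, logS ^ j = (PowerSeries.C : ℂ →+* PowerSeries ℂ) (Nat.factorial j) * egf (fun k => S1 k j))
    (n : ℕ) :
    Bs n = ∑ m ∈ Finset.range (n+1), ∑ k ∈ Finset.range (m+1), ∑ l ∈ Finset.range ((k-1)/2+1),
      (n.choose m : ℂ) * (k.choose (2*l+1) : ℂ) * (-1)^l * (lam:ℂ)^(n-k) * S1 m k *
        b (n-m) * B (k-2*l-1) * (y:ℂ)^(2*l+1) := by
  have h := egf_eq_subst_degLog_mul hBs hB hb
  rw [sinS_mul_egf, egf_subst_degLog hS1, egf_mul] at h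
  rw [egf_injective h]
  refine sum_congr rfl fun m hm => ?_
  rw [mul_sum, sum_mul]
  refine sum_congr rfl fun k hk => ?_
  rw [mul_sum, mul_sum, sum_mul]
  refine sum_congr rfl fun l _ => ?_
  rw [mem_range] at hm hk
  rw [show n - k = (m - k) + (n - m) by omega, pow_add]
  ring

theorem stmt19 (lam x y : ℝ) (Bs B b : ℕ → ℂ) (S1 : ℕ → ℕ → ℂ)
    (hBs : egf Bs * (degExp lam (1/2) - degExp lam (-(1/2))) =
      PowerSeries.X * degExp lam x * degSin lam y)
    (hB : egf B * (expS (1/2) - expS (-(1/2))) = PowerSeries.X * expS x)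
    (hb : egf b * logS = PowerSeries.X)
    (hS1 : ∀ j, logS ^ j = (PowerSeries.C : ℂ →+* PowerSeries ℂ) (Nat.factorial j) * egf (fun k => S1 k j))
    (n : ℕ) (hn : 0 < n) :
    Bs n = ∑ m ∈ Finset.range (n+1), ∑ k ∈ Finset.range (m+1), ∑ l ∈ Finset.range ((k-1)/2+1),
      (n.choose m : ℂ) * (k.choose (2*l+1) : ℂ) * (-1)^l * (lam:ℂ)^(n-k) * S1 m k *
        b (n-m) * B (k-2*l-1) * (y:ℂ)^(2*l+1) :=
  stmt19_general lam x y Bs B b S1 hBs hB hb hS1 n
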